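/- arXiv:2007.05833 — 2 statements merged into one kernel-verified Lean document; each statement's English description precedes it below -/
import Mathlib

section
/- For pointed types X and Y, the canonical symmetry map τ : X ∧ Y → Y ∧ X on the smash product satisfies τ ∘ τ pointed-homotopic to the identity; in particular τ is an equivalence. -/
/- HoTT-style prelude: pointed types, smash products, loop spaces,
   truncation/connectivity, homotopy groups, EM spaces, homology. -/

universe u v

structure PType : Type (u+1) where
  carrier : Type u
  pt : carrier

instance : CoeSort PType.{u} (Type u) := ⟨PType.carrier⟩

structure PMap (X Y : PType.{u}) : Type u where
  toFun : X → Y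
  ptd : toFun X.pt = Y.pt

instance {X Y : PType.{u}} : CoeFun (PMap X Y) (fun _ => X → Y) := ⟨PMap.toFun⟩

theorem PMap.ext' {X Y : PType.{u}} {f g : PMap X Y} (h : f.toFun = g.toFun) : f = g := by
  cases f; cases g; cases h; rfl

def PMap.id (X : PType.{u}) : PMap X X := ⟨fun x => x, rfl⟩

def PMap.comp {X Y Z : PType.{u}} (g : PMap Y Z) (f : PMap X Y) : PMap X Z :=
  ⟨fun x => g.toFun (f.toFun x), by show g.toFun (f.toFun X.pt) = Z.pt; rw [f.ptd, g.ptd]⟩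

/-- Pointed homotopy (set-level). -/
def PHomotopy {X Y : PType.{u}} (f g : PMap X Y) : Prop := ∀ x, f.toFun x = g.toFun x

/-- Contractibility. -/
def IsContr (X : Type u) : Prop := Nonempty X ∧ Subsingleton X

/-- A universe-adjusted propositional wrapper. -/
def PL (p : Prop) : Type u := ULift.{u} (PLift p)

def PL.mk {p : Prop} (h : p) : PL.{u} p := ⟨⟨h⟩⟩

instance pl_subsingleton {p : Prop} : Subsingleton (PL.{u} p) :=
  ⟨fun a b => by cases a; cases b; apply congrArg; apply Subsingleton.elim⟩

/-- `n`-truncation (set-level model). -/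
def NTrunc : ℤ → Type u → Type u
  | .ofNat _, X => X
  | .negSucc 0, X => PL (Nonempty X)
  | .negSucc (_+1), _ => PUnit

def truncMk : (n : ℤ) → {X : Type u} → X → NTrunc n X
  | .ofNat _, _, x => x
  | .negSucc 0, _, x => PL.mk ⟨x⟩
  | .negSucc (_+1), _, _ => ⟨⟩

def truncFunc : (n : ℤ) → {X Y : Type u} → (X → Y) → NTrunc n X → NTrunc n Y
  | .ofNat _, _, _, f, x => f x
  | .negSucc 0, _, _, f, t => PL.mk (t.down.down.elim fun x => ⟨f x⟩)
  | .negSucc (_+1), _, _, _, _ => ⟨⟩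

theorem truncFunc_mk : ∀ (n : ℤ) {X Y : Type u} (f : X → Y) (x : X),
    truncFunc n f (truncMk n x) = truncMk n (f x)
  | .ofNat _, _, _, _, _ => rfl
  | .negSucc 0, _, _, _, _ => @Subsingleton.elim _ pl_subsingleton _ _
  | .negSucc (_+1), _, _, _, _ => rfl

/-- `X` is `n`-connected iff its `n`-truncation is contractible. -/
def IsConnType (n : ℤ) (X : Type u) : Prop := IsContr (NTrunc n X)

def IsTruncAux : ℕ → Type u → Prop
  | 0, X => IsContr X
  | k+1, X => ∀ x y : X, IsTruncAux k (PL (x = y))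

/-- `X` is an `n`-type. -/
def IsTruncT (n : ℤ) (X : Type u) : Prop := IsTruncAux (n + 2).toNat X

/-- Pointed truncation. -/
def PTrunc (n : ℤ) (X : PType.{u}) : PType.{u} := ⟨NTrunc n X.carrier, truncMk n X.pt⟩

def pTruncMap (n : ℤ) (X : PType.{u}) : PMap X (PTrunc n X) := ⟨truncMk n, rfl⟩

def pTruncFunc (n : ℤ) {X Y : PType.{u}} (f : PMap X Y) : PMap (PTrunc n X) (PTrunc n Y) :=
  ⟨truncFunc n f.toFun, by
    show truncFunc n f.toFun (truncMk n X.pt) = truncMk n Y.pt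
    rw [truncFunc_mk, f.ptd]⟩

/-! ### Smash products -/

def wedgeIn (X Y : PType.{u}) (p : X.carrier × Y.carrier) : Prop := p.1 = X.pt ∨ p.2 = Y.pt

def SmashRel (X Y : PType.{u}) (p q : X.carrier × Y.carrier) : Prop :=
  p = q ∨ (wedgeIn X Y p ∧ wedgeIn X Y q)

def Smash (X Y : PType.{u}) : PType.{u} :=
  ⟨Quot (SmashRel X Y), Quot.mk _ (X.pt, Y.pt)⟩

def smashMk {X Y : PType.{u}} (x : X) (y : Y) : Smash X Y := Quot.mk _ (x, y)

/-- The symmetry map of the smash product. -/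
def smashSwap (X Y : PType.{u}) : PMap (Smash X Y) (Smash Y X) where
  toFun := Quot.lift (fun p => smashMk p.2 p.1) (by
    rintro p q (rfl | ⟨hp, hq⟩)
    · rfl
    · exact Quot.sound (Or.inr ⟨hp.symm, hq.symm⟩))
  ptd := rfl

/-- Functoriality of the smash product. -/
def PMap.smash {X X' Y Y' : PType.{u}} (f : PMap X X') (g : PMap Y Y') :
    PMap (Smash X Y) (Smash X' Y') where
  toFun := Quot.lift (fun p => smashMk (f.toFun p.1) (g.toFun p.2)) (by
    rintro p q (rfl | ⟨hp, hq⟩)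
    · rfl
    · refine Quot.sound (Or.inr ⟨?_, ?_⟩)
      · exact hp.imp (fun h => by rw [h, f.ptd]) (fun h => by rw [h, g.ptd])
      · exact hq.imp (fun h => by rw [h, f.ptd]) (fun h => by rw [h, g.ptd]))
  ptd := by
    show smashMk (f.toFun X.pt) (g.toFun Y.pt) = smashMk X'.pt Y'.pt
    rw [f.ptd, g.ptd]

/-! ### Pointed mapping types -/

def pconst (X Y : PType.{u}) : PMap X Y := ⟨fun _ => Y.pt, rfl⟩

/-- The pointed type of pointed maps, pointed at the constant map. -/
def PMapT (X Y : PType.{u}) : PType.{u} := ⟨PMap X Y, pconst X Y⟩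

/-- The canonical curried map `X →∗ (Y →∗ X ∧ Y)`. -/
def smashCurry (X Y : PType.{u}) : PMap X (PMapT Y (Smash X Y)) where
  toFun x := ⟨fun y => smashMk x y, Quot.sound (Or.inr ⟨Or.inr rfl, Or.inr rfl⟩)⟩
  ptd := PMap.ext' (funext fun _ => Quot.sound (Or.inr ⟨Or.inl rfl, Or.inl rfl⟩))

/-- Postcomposition on pointed mapping types. -/
def pcompMap {Z W : PType.{u}} (Y : PType.{u}) (h : PMap Z W) : PMap (PMapT Y Z) (PMapT Y W) :=
  ⟨fun k => h.comp k, PMap.ext' (funext fun _ => h.ptd)⟩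

/-- Precomposition on pointed mapping types. -/
def precompMap {Y Y' : PType.{u}} (Z : PType.{u}) (h : PMap Y' Y) :
    PMap (PMapT Y Z) (PMapT Y' Z) :=
  ⟨fun k => k.comp h, PMap.ext' rfl⟩

/-! ### Suspension -/

def Susp (X : PType.{u}) : PType.{u} :=
  ⟨Quot (fun (_ _ : ULift.{u} Bool) => Nonempty X.carrier), Quot.mk _ ⟨true⟩⟩

def suspFunc {X Y : PType.{u}} (f : PMap X Y) : PMap (Susp X) (Susp Y) :=
  ⟨Quot.lift (fun b => Quot.mk _ b) (fun _ _ h => h.elim fun x => Quot.sound ⟨f.toFun x⟩), rfl⟩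

/-! ### Loop spaces -/

def Loop (X : PType.{u}) : PType.{u} := ⟨PL (X.pt = X.pt), PL.mk rfl⟩

instance loop_subsingleton (X : PType.{u}) : Subsingleton (Loop X).carrier :=
  pl_subsingleton

/-- Concatenation of loops. -/
def loopMul {X : PType.{u}} (p q : (Loop X).carrier) : (Loop X).carrier :=
  PL.mk (p.down.down.trans q.down.down)

def LoopMap {X Y : PType.{u}} (f : PMap X Y) : PMap (Loop X) (Loop Y) :=
  ⟨fun p => PL.mk (f.ptd.symm.trans ((congrArg f.toFun p.down.down).trans f.ptd)),
   Subsingleton.elim _ _⟩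

/-- Iterated loop spaces. -/
def Ωn : ℕ → PType.{u} → PType.{u}
  | 0, X => X
  | n+1, X => Loop (Ωn n X)

instance Ωn_succ_subsingleton (n : ℕ) (X : PType.{u}) : Subsingleton (Ωn (n+1) X).carrier :=
  loop_subsingleton (Ωn n X)

def ΩnMap : (n : ℕ) → {X Y : PType.{u}} → PMap X Y → PMap (Ωn n X) (Ωn n Y)
  | 0, _, _, f => f
  | n+1, _, _, f => LoopMap (ΩnMap n f)

/-- Pointwise multiplication of pointed maps into a loop space. -/
def pmul {Y W : PType.{u}} (f g : PMap Y (Loop W)) : PMap Y (Loop W) :=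
  ⟨fun y => loopMul (f.toFun y) (g.toFun y), Subsingleton.elim _ _⟩

/-! ### Homotopy groups -/

/-- `homotopyGroup k X` is `π_{k+1}(X)`. -/
def homotopyGroup (k : ℕ) (X : PType.{u}) : Type u := (Ωn (k+1) X).carrier

instance homotopyGroup_subsingleton (k : ℕ) (X : PType.{u}) :
    Subsingleton (homotopyGroup k X) :=
  Ωn_succ_subsingleton k X

instance homotopyGroup_nonempty (k : ℕ) (X : PType.{u}) : Nonempty (homotopyGroup k X) :=
  ⟨(Ωn (k+1) X).pt⟩

instance homotopyGroup_group (k : ℕ) (X : PType.{u}) : Group (homotopyGroup k X) where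
  mul := loopMul
  one := (Ωn (k+1) X).pt
  inv p := p
  mul_assoc _ _ _ := Subsingleton.elim _ _
  one_mul _ := Subsingleton.elim _ _
  mul_one _ := Subsingleton.elim _ _
  inv_mul_cancel _ := Subsingleton.elim _ _

instance homotopyGroup_commGroup (k : ℕ) (X : PType.{u}) :
    CommGroup (homotopyGroup (k+1) X) :=
  { homotopyGroup_group (k+1) X with mul_comm := fun _ _ => Subsingleton.elim _ _ }

def piMap (k : ℕ) {X Y : PType.{u}} (f : PMap X Y) : homotopyGroup k X → homotopyGroup k Y :=
  (ΩnMap (k+1) f).toFun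

def piHom (k : ℕ) {X Y : PType.{u}} (f : PMap X Y) :
    homotopyGroup k X →* homotopyGroup k Y :=
  { toFun := piMap k f
    map_one' := Subsingleton.elim _ _
    map_mul' := fun _ _ => Subsingleton.elim _ _ }

def loopShiftMap (V : PType.{u}) : (k : ℕ) → PMap (Ωn k (Loop V)) (Ωn (k+1) V)
  | 0 => PMap.id (Loop V)
  | k+1 => LoopMap (loopShiftMap V k)

/-- `π_{k+1}(Ω V) → π_{k+2}(V)`. -/
def piShift (k : ℕ) (V : PType.{u}) : homotopyGroup k (Loop V) → homotopyGroup (k+1) V :=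
  (loopShiftMap V (k+1)).toFun

/-- The suspension unit (Freudenthal) map `Z →∗ ΩΣZ`. -/
def suspUnit (Z : PType.{u}) : PMap Z (Loop (Susp Z)) :=
  ⟨fun _ => PL.mk rfl, Subsingleton.elim _ _⟩

/-- The comparison map `Σ(X ∧ Y) →∗ X ∧ ΣY`. -/
def suspSmashMap (X Y : PType.{u}) : PMap (Susp (Smash X Y)) (Smash X (Susp Y)) :=
  ⟨Quot.lift (fun _ => (Smash X (Susp Y)).pt) (fun _ _ _ => rfl), rfl⟩

/-! ### Stabilization maps and homology -/

/-- The stabilization map `π_{p+1}(X ∧ K_q) → π_{p+2}(X ∧ K_{q+1})`, given as the composite of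
the Freudenthal suspension map, the equivalence `Σ(X ∧ K_q) ≃ X ∧ ΣK_q`, and the truncation
`K_{q+1} = ∥ΣK_q∥_{q+1}`. -/
def stabMap (p q : ℕ) (X : PType.{u}) (K : ℕ → PType.{u})
    (hrec : K (q+1) = PTrunc ((q : ℤ)+1) (Susp (K q))) :
    homotopyGroup p (Smash X (K q)) → homotopyGroup (p+1) (Smash X (K (q+1))) :=
  fun a =>
    cast (congrArg (fun T => homotopyGroup (p+1) (Smash X T)) hrec.symm)
      (piMap (p+1) ((PMap.id X).smash (pTruncMap ((q : ℤ)+1) (Susp (K q))))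
        (piMap (p+1) (suspSmashMap X (K q))
          (piShift p (Susp (Smash X (K q)))
            (piMap p (suspUnit (Smash X (K q))) a))))

/-- Eilenberg–MacLane spaces: `K(A,0) = A` and `K(A,i+1) = ∥ΣK(A,i)∥_{i+1}`. -/
def EM (A : Type u) [AddCommGroup A] : ℕ → PType.{u}
  | 0 => ⟨A, 0⟩
  | i+1 => PTrunc ((i : ℤ)+1) (Susp (EM A i))

/-! ### Sequential colimits -/

inductive SeqRel (D : ℕ → Type u) (f : ∀ k, D k → D (k+1)) : (Σ k, D k) → (Σ k, D k) → Prop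
  | glue (k : ℕ) (a : D k) : SeqRel D f ⟨k, a⟩ ⟨k+1, f k a⟩

def SeqColim (D : ℕ → Type u) (f : ∀ k, D k → D (k+1)) : Type u := Quot (SeqRel D f)

def seqIncl {D : ℕ → Type u} (f : ∀ k, D k → D (k+1)) (k : ℕ) (a : D k) : SeqColim D f :=
  Quot.mk _ ⟨k, a⟩

def seqIter {D : ℕ → Type u} (f : ∀ k, D k → D (k+1)) (k : ℕ) : (j : ℕ) → D k → D (k + j)
  | 0, a => a
  | j+1, a => f _ (seqIter f k j a)

theorem seqColim_mk_eq {D : ℕ → Type u} [∀ k, Subsingleton (D k)] (f : ∀ k, D k → D (k+1))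
    {k l : ℕ} (h : k = l) (a : D k) (b : D l) :
    seqIncl f k a = seqIncl f l b := by
  subst h
  exact congrArg (fun x => seqIncl f k x) (Subsingleton.elim a b)

theorem seqColim_glue_iter {D : ℕ → Type u} (f : ∀ k, D k → D (k+1)) (k : ℕ) :
    ∀ (j : ℕ) (a : D k), seqIncl f k a = seqIncl f (k+j) (seqIter f k j a)
  | 0, a => rfl
  | j+1, a => (seqColim_glue_iter f k j a).trans (Quot.sound (SeqRel.glue (k+j) (seqIter f k j a)))

instance seqColim_subsingleton {D : ℕ → Type u} [∀ k, Subsingleton (D k)]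
    (f : ∀ k, D k → D (k+1)) : Subsingleton (SeqColim D f) := by
  constructor
  intro x y
  induction x using Quot.ind with | _ s => ?_
  induction y using Quot.ind with | _ t => ?_
  obtain ⟨k, a⟩ := s
  obtain ⟨l, b⟩ := t
  calc (seqIncl f k a : SeqColim D f)
      = seqIncl f (k+l) (seqIter f k l a) := seqColim_glue_iter f k l a
    _ = seqIncl f (l+k) (seqIter f l k b) := seqColim_mk_eq f (Nat.add_comm k l) _ _
    _ = seqIncl f l b := (seqColim_glue_iter f l k b).symm

instance seqColim_nonempty {D : ℕ → Type u} [∀ k, Nonempty (D k)]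
    (f : ∀ k, D k → D (k+1)) : Nonempty (SeqColim D f) :=
  ⟨seqIncl f 0 (Classical.arbitrary _)⟩

/-- The induced map on sequential colimits. -/
def seqColimMap {D D' : ℕ → Type u} [∀ k, Subsingleton (D' k)]
    (f : ∀ k, D k → D (k+1)) (f' : ∀ k, D' k → D' (k+1)) (g : ∀ k, D k → D' k) :
    SeqColim D f → SeqColim D' f' :=
  Quot.lift (fun s => seqIncl f' s.1 (g s.1 s.2)) (by
    rintro _ _ ⟨k, a⟩
    have h : g (k+1) (f k a) = f' k (g k a) := Subsingleton.elim _ _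
    show seqIncl f' k (g k a) = seqIncl f' (k+1) (g (k+1) (f k a))
    rw [h]
    exact Quot.sound (SeqRel.glue k (g k a)))

noncomputable def trivialAddCommGroup (α : Type u) [Subsingleton α] [Nonempty α] :
    AddCommGroup α where
  add _ _ := Classical.arbitrary α
  zero := Classical.arbitrary α
  neg a := a
  add_assoc _ _ _ := Subsingleton.elim _ _
  zero_add _ := Subsingleton.elim _ _
  add_zero _ := Subsingleton.elim _ _
  add_comm _ _ := Subsingleton.elim _ _
  neg_add_cancel _ := Subsingleton.elim _ _
  nsmul _ _ := Classical.arbitrary α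
  nsmul_zero _ := Subsingleton.elim _ _
  nsmul_succ _ _ := Subsingleton.elim _ _
  zsmul _ _ := Classical.arbitrary α
  zsmul_zero' _ := Subsingleton.elim _ _
  zsmul_succ' _ _ := Subsingleton.elim _ _
  zsmul_neg' _ _ := Subsingleton.elim _ _

/-- Reduced homology `H̃_n(X; A)`, as the sequential colimit of
`π_{n+j+i}(X ∧ K(A, j+i))` with `j = max(0, 2-n)`, along the stabilization maps. -/
def Homology (n : ℕ) (X : PType.{u}) (A : Type u) [AddCommGroup A] : Type u :=
  SeqColim (fun i => homotopyGroup ((n + (2-n) - 1) + i) (Smash X (EM A ((2-n)+i))))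
           (fun i => stabMap ((n + (2-n) - 1) + i) ((2-n)+i) X (EM A) rfl)

instance homology_subsingleton (n : ℕ) (X : PType.{u}) (A : Type u) [AddCommGroup A] :
    Subsingleton (Homology n X A) :=
  seqColim_subsingleton _

instance homology_nonempty (n : ℕ) (X : PType.{u}) (A : Type u) [AddCommGroup A] :
    Nonempty (Homology n X A) :=
  seqColim_nonempty _

noncomputable instance homology_addCommGroup (n : ℕ) (X : PType.{u}) (A : Type u)
    [AddCommGroup A] : AddCommGroup (Homology n X A) :=
  trivialAddCommGroup _

/-- Functoriality of homology in the space. -/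
def homologyMap (n : ℕ) {X Y : PType.{u}} (f : PMap X Y) (A : Type u) [AddCommGroup A] :
    Homology n X A → Homology n Y A :=
  seqColimMap _ _ (fun i => piMap _ (f.smash (PMap.id (EM A ((2-n)+i)))))

/-- Functoriality of EM spaces in the coefficient group. -/
def emMap {A B : Type u} [AddCommGroup A] [AddCommGroup B] (g : A →+ B) :
    (i : ℕ) → PMap (EM A i) (EM B i)
  | 0 => ⟨g, map_zero g⟩
  | i+1 => pTruncFunc ((i : ℤ)+1) (suspFunc (emMap g i))

/-- Functoriality of homology in the coefficients. -/
def homologyCoefMap (n : ℕ) (X : PType.{u}) {A B : Type u} [AddCommGroup A] [AddCommGroup B]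
    (g : A →+ B) : Homology n X A → Homology n X B :=
  seqColimMap _ _ (fun i => piMap _ ((PMap.id X).smash (emMap g ((2-n)+i))))

/-- Spheres. -/
def Sph : ℕ → PType.{u}
  | 0 => ⟨ULift Bool, ⟨true⟩⟩
  | n+1 => Susp (Sph n)

/-! ### Bilinearity and tensor products (multiplicative abelian groups) -/

/-- `f : G → H → A` is bilinear: a homomorphism in each variable. -/
def Bilin {G H A : Type u} [Group G] [Group H] [CommGroup A] (f : G → H → A) : Prop :=
  (∀ a b c, f a (b*c) = f a b * f a c) ∧ (∀ b a c, f (a*c) b = f a b * f c b)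

/-- `t : A → B → T` exhibits `T` as the tensor product of `A` and `B`. -/
def IsTensorProductOf {A B T : Type u} [CommGroup A] [CommGroup B] [CommGroup T]
    (t : A → B → T) : Prop :=
  Bilin t ∧ ∀ (C : Type u) [CommGroup C], ∀ f : A → B → C, Bilin f →
    ∃! φ : T →* C, ∀ a b, φ (t a b) = f a b

/-! ### Structures-on-a-type, for unique-group-structure statements -/

structure GroupStrOn (X : Type u) where
  mul : X → X → X
  one : X
  inv : X → X
  mul_assoc : ∀ a b c, mul (mul a b) c = mul a (mul b c)
  one_mul : ∀ a, mul one a = a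
  mul_one : ∀ a, mul a one = a
  inv_mul : ∀ a, mul (inv a) a = one

structure AddGroupStrOn (X : Type u) where
  add : X → X → X
  zero : X
  neg : X → X
  add_assoc : ∀ a b c, add (add a b) c = add a (add b c)
  zero_add : ∀ a, add zero a = a
  add_zero : ∀ a, add a zero = a
  neg_add : ∀ a, add (neg a) a = zero
/-- For pointed types `X`, `Y`, the symmetry map `τ : X ∧ Y → Y ∧ X` satisfies
`τ ∘ τ` pointed-homotopic to the identity; in particular `τ` is an equivalence. -/
theorem smashSwap_involutive (X Y : PType.{u}) :
    PHomotopy ((smashSwap Y X).comp (smashSwap X Y)) (PMap.id (Smash X Y)) ∧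
    Function.Bijective (smashSwap X Y).toFun := by
  have h : ∀ (A B : PType.{u}) (z : (Smash A B).carrier),
      (smashSwap B A).toFun ((smashSwap A B).toFun z) = z := by
    intro A B z
    induction z using Quot.ind with | _ p => obtain ⟨a, b⟩ := p; simp only [smashSwap, smashMk]; rfl
  exact ⟨fun z => h X Y z, Function.bijective_iff_has_inverse.mpr
    ⟨(smashSwap Y X).toFun, h X Y, h Y X⟩⟩
end

section
/- Given pointed maps f : X → X' and g : Y → Y' between pointed types, the square relating τ with f ∧ g commutes: τ ∘ (f ∧ g) is pointed-homotopic to (g ∧ f) ∘ τ as maps X ∧ Y → Y' ∧ X'. -/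
/- HoTT-style prelude: pointed types, smash products, loop spaces,
   truncation/connectivity, homotopy groups, EM spaces, homology. -/

universe u v

/-- Naturality of the symmetry map of the smash product:
`τ ∘ (f ∧ g)` is pointed-homotopic to `(g ∧ f) ∘ τ`. -/
theorem smashSwap_natural {X X' Y Y' : PType.{u}} (f : PMap X X') (g : PMap Y Y') :
    PHomotopy ((smashSwap X' Y').comp (f.smash g)) ((g.smash f).comp (smashSwap X Y)) := by
  intro x
  induction x using Quot.ind with | _ p => ?_
  show (smashSwap X' Y').toFun ((f.smash g).toFun (Quot.mk _ p)) =
    (g.smash f).toFun ((smashSwap X Y).toFun (Quot.mk _ p))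
  rw [show (f.smash g).toFun (Quot.mk (SmashRel X Y) p) =
        smashMk (f.toFun p.1) (g.toFun p.2) from rfl,
      show (smashSwap X Y).toFun (Quot.mk (SmashRel X Y) p) = smashMk p.2 p.1 from rfl]
  rfl
end
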